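/- arXiv:1905.06679 — 7 statements merged into one kernel-verified Lean document; each statement's English description precedes it below -/
import Mathlib

section
/- Let X be a nonnegative random variable whose CDF has the piecewise form: Pr(X ≤ x) = 0 for x < τ_B, Pr(X ≤ x) = F_i(x) for τ_i ≤ x < τ_{i-1} (for i = 2,...,B), and Pr(X ≤ x) = F_1(x) for x ≥ τ_1, where 0 < τ_B ≤ ... ≤ τ_1 and each F_i is the CDF of a nonnegative random variable, depending smoothly on the parameters. Then for each i, the partial derivative of E[X²] with respect to τ_i equals 2τ_i times the partial derivative of E[X] with respect to τ_i. -/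
/-!
Moving the threshold `t` changes the survival function only at `x = t`, where it jumps from
`g t` to `h t`; hence the first-moment integral `∫ (if x < t then g x else h x)` has derivative
`g t - h t` in `t`. In the second-moment integral the integrand carries the extra factor `2 x`,
which at the jump equals `2 t`, so its derivative is `2 t (g t - h t)`.
-/

open MeasureTheory Set Filter

variable {E : Type*} [NormedAddCommGroup E] [NormedSpace ℝ E]

theorem intervalIntegral.integral_ite_lt_eq_add {a b s : ℝ} {g h : ℝ → E} (hs : s ∈ Icc a b)
    (hg : IntervalIntegrable g volume a s) (hh : IntervalIntegrable h volume s b) :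
    ∫ x in a..b, (if x < s then g x else h x) = (∫ x in a..s, g x) + ∫ x in s..b, h x := by
  have hleft : ∀ᵐ x, x ∈ uIoc a s → (if x < s then g x else h x) = g x := by
    filter_upwards [volume.ae_ne s] with x hxs hx
    rw [uIoc_of_le hs.1] at hx
    exact if_pos (lt_of_le_of_ne hx.2 hxs)
  have hright : ∀ x ∈ uIcc s b, (if x < s then g x else h x) = h x := by
    intro x hx
    rw [uIcc_of_le hs.2] at hx
    exact if_neg (not_lt.2 hx.1)
  have hleft_uIoc := (ae_restrict_iff' measurableSet_uIoc).2 hleft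
  rw [← intervalIntegral.integral_add_adjacent_intervals
      (hg.congr_ae (hleft_uIoc.mono fun x hx => hx.symm))
      (hh.congr fun x hx => (hright x (uIoc_subset_uIcc hx)).symm),
    intervalIntegral.integral_congr_ae hleft, intervalIntegral.integral_congr hright]

theorem hasDerivAt_integral_ite_lt [CompleteSpace E] {a b t : ℝ} {g h : ℝ → E}
    (hg : Continuous g) (hh : Continuous h) (ht : t ∈ Ioo a b) :
    HasDerivAt (fun s => ∫ x in a..b, if x < s then g x else h x) (g t - h t) t := by
  have hsplit : (fun s => (∫ x in a..s, g x) + ∫ x in s..b, h x)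
      =ᶠ[nhds t] fun s => ∫ x in a..b, if x < s then g x else h x :=
    eventually_of_mem (isOpen_Ioo.mem_nhds ht) fun s hs =>
      (intervalIntegral.integral_ite_lt_eq_add (Ioo_subset_Icc_self hs)
        (hg.intervalIntegrable a s) (hh.intervalIntegrable s b)).symm
  rw [sub_eq_add_neg]
  exact ((intervalIntegral.integral_hasDerivAt_right (hg.intervalIntegrable a t)
      hg.stronglyMeasurable.stronglyMeasurableAtFilter hg.continuousAt).add
    (intervalIntegral.integral_hasDerivAt_left (hh.intervalIntegrable t b)
      hh.stronglyMeasurable.stronglyMeasurableAtFilter hh.continuousAt)).congr_of_eventuallyEq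
    hsplit.symm

theorem hasDerivAt_of_eqOn_const_add_integral_ite_lt [CompleteSpace E] {a b t : ℝ}
    {g h m : ℝ → E} {c : E} (hg : Continuous g) (hh : Continuous h)
    (hm : ∀ s ∈ Icc a b, m s = c + ∫ x in a..b, (if x < s then g x else h x))
    (ht : t ∈ Ioo a b) : HasDerivAt m (g t - h t) t :=
  ((hasDerivAt_integral_ite_lt hg hh ht).const_add c).congr_of_eventuallyEq <|
    eventually_of_mem (isOpen_Ioo.mem_nhds ht) fun s hs => hm s (Ioo_subset_Icc_self hs)

/-- Lemma `diffmoments`, abstracted: near the threshold `τ_i = t`,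
the survival function of `X` has the form `x ↦ if x < t then g x else h x` on an
interval `[a, b]` containing `t` (with `g = 1 - F_{i+1}`, `h = 1 - F_i` fixed CDF
complements not depending on the threshold), and the contributions outside `[a,b]`
do not depend on `t`.  Then `∂/∂τ_i E[X²] = 2 τ_i ∂/∂τ_i E[X]`. -/
theorem stmt_0 (a b : ℝ) (g h : ℝ → ℝ) (hg : Continuous g) (hh : Continuous h)
    (c₁ c₂ : ℝ) (m₁ m₂ : ℝ → ℝ)
    (hm₁ : ∀ t ∈ Set.Icc a b,
      m₁ t = c₁ + ∫ x in a..b, (if x < t then g x else h x))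
    (hm₂ : ∀ t ∈ Set.Icc a b,
      m₂ t = c₂ + ∫ x in a..b, 2 * x * (if x < t then g x else h x))
    (t : ℝ) (ht : t ∈ Set.Ioo a b) (d : ℝ) (hd : HasDerivAt m₁ d t) :
    HasDerivAt m₂ (2 * t * d) t := by
  obtain rfl : d = g t - h t :=
    hd.unique (hasDerivAt_of_eqOn_const_add_integral_ite_lt hg hh hm₁ ht)
  have hm₂' : ∀ s ∈ Icc a b,
      m₂ s = c₂ + ∫ x in a..b, (if x < s then 2 * x * g x else 2 * x * h x) := by
    simpa only [mul_ite] using hm₂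
  rw [mul_sub]
  exact hasDerivAt_of_eqOn_const_add_integral_ite_lt (by fun_prop) (by fun_prop) hm₂' ht
end

section
/- Let μ > 0 and define f(τ) = (½(μτ)² + e^{-μτ}(μτ + 1)) / (μ(μτ + e^{-μτ})) for τ > 0. Then the unique τ* > 0 satisfying τ* = f(τ*) is characterized by the equation (τ*)² = (2/μ²) e^{-μτ*}. -/
/-- for the unit-battery average-age function
`f(τ) = (½(μτ)² + e^{-μτ}(μτ+1)) / (μ(μτ + e^{-μτ}))`, a point `τ > 0` is a fixed
point `τ = f(τ)` if and only if `τ² = (2/μ²) e^{-μτ}`. -/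
theorem stmt_3 (μ : ℝ) (hμ : 0 < μ) (f : ℝ → ℝ)
    (hf : ∀ τ > 0, f τ =
      ((1/2) * (μ * τ)^2 + Real.exp (-μ * τ) * (μ * τ + 1))
        / (μ * (μ * τ + Real.exp (-μ * τ))))
    (τ : ℝ) (hτ : 0 < τ) :
    τ = f τ ↔ τ ^ 2 = (2 / μ ^ 2) * Real.exp (-μ * τ) := by
  rw [hf τ hτ]
  have hE : 0 < Real.exp (-μ * τ) := Real.exp_pos _
  set E := Real.exp (-μ * τ) with hEdef
  have hden : μ * (μ * τ + E) ≠ 0 := by positivity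
  rw [eq_div_iff hden]
  constructor
  · intro h
    have hμ2 : (μ:ℝ)^2 ≠ 0 := by positivity
    rw [div_mul_eq_mul_div, eq_div_iff hμ2]
    nlinarith [h]
  · intro h
    have h2 : τ ^ 2 * μ ^ 2 = 2 * E := by
      rw [h]; field_simp
    nlinarith [h2]
end

section
/- Let f: [0,∞) → ℝ be Lebesgue-measurable and bounded, and suppose L = lim_{T→∞} (1/T)∫₀^T f(t) dt exists. Then lim_{α↓0} α ∫₀^∞ e^{-αt} f(t) dt exists and equals L. -/
/-!
Fubini turns the Abel mean into a Laplace transform of the primitive `F T = ∫₀^T f`: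
`α ∫ e^{-αt} f t dt = α² ∫ e^{-αs} F s ds`, and the substitution `u = α s` rewrites this as
`∫ u e^{-u} C (u / α) du`, where `C T = F T / T` is the Cesàro mean. Since `|C| ≤ M` and
`C (u / α) → L` for every `u > 0` as `α ↓ 0`, dominated convergence gives the limit
`L ∫ u e^{-u} du = L`.
-/

open Filter MeasureTheory Set Real Topology

lemma integral_exp_neg_mul_self_Ioi : ∫ u in Ioi (0:ℝ), exp (-u) * u = 1 := by
  have h := (Gamma_eq_integral (by norm_num : (0:ℝ) < 2)).symm
  norm_num [Gamma_two] at h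
  exact h

lemma integrableOn_exp_neg_mul_self_Ioi : IntegrableOn (fun u : ℝ => exp (-u) * u) (Ioi 0) := by
  have h := GammaIntegral_convergent (by norm_num : (0:ℝ) < 2)
  norm_num at h
  exact h

lemma integral_Ici_exp_neg_mul {α : ℝ} (hα : 0 < α) (t : ℝ) :
    ∫ s in Ici t, exp (-α * s) = α⁻¹ * exp (-α * t) := by
  rw [integral_Ici_eq_integral_Ioi, integral_exp_mul_Ioi (neg_lt_zero.2 hα)]
  field_simp

lemma abs_one_div_mul_intervalIntegral_le {f : ℝ → ℝ} {M : ℝ} (hb : ∀ t, |f t| ≤ M) (T : ℝ) :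
    |(1 / T) * ∫ t in (0:ℝ)..T, f t| ≤ M := by
  rcases eq_or_ne T 0 with rfl | hT
  · simpa using (abs_nonneg _).trans (hb 0)
  have h := intervalIntegral.norm_integral_le_of_norm_le_const (a := 0) (b := T) (f := f)
    fun t _ => hb t
  rw [sub_zero, norm_eq_abs] at h
  rw [abs_mul, abs_one_div, one_div_mul_eq_div, div_le_iff₀ (abs_pos.2 hT)]
  exact h

lemma tendsto_setIntegral_mul_comp_div {k C : ℝ → ℝ} {M L : ℝ} (hk : IntegrableOn k (Ioi 0))
    (hC : Measurable C) (hCM : ∀ x, |C x| ≤ M) (hCL : Tendsto C atTop (𝓝 L)) :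
    Tendsto (fun α => ∫ u in Ioi 0, k u * C (u / α)) (𝓝[>] 0)
      (𝓝 ((∫ u in Ioi 0, k u) * L)) := by
  rw [← integral_mul_const]
  refine tendsto_integral_filter_of_dominated_convergence (fun u => ‖k u‖ * M)
    (Eventually.of_forall fun α =>
      hk.aestronglyMeasurable.mul (hC.comp (measurable_id.div_const α)).aestronglyMeasurable)
    (Eventually.of_forall fun α => Eventually.of_forall fun u => ?_) (hk.norm.mul_const M) ?_
  · rw [norm_mul]
    exact mul_le_mul_of_nonneg_left (hCM _) (norm_nonneg _)
  · filter_upwards [self_mem_ae_restrict measurableSet_Ioi] with u (hu : 0 < u)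
    have hdiv : Tendsto (fun α => u / α) (𝓝[>] 0) atTop := by
      simpa only [div_eq_mul_inv] using tendsto_inv_nhdsGT_zero.const_mul_atTop hu
    exact tendsto_const_nhds.mul (hCL.comp hdiv)

section Laplace

variable {f : ℝ → ℝ} {M α : ℝ}

lemma setIntegral_exp_neg_mul_mul_intervalIntegral (hf : Measurable f) (hb : ∀ t, |f t| ≤ M)
    (hα : 0 < α) :
    ∫ s in Ioi 0, exp (-α * s) * ∫ t in (0:ℝ)..s, f t
      = α⁻¹ * ∫ t in Ioi 0, exp (-α * t) * f t := by
  set ψ : ℝ → ℝ → ℝ := fun s t => {p : ℝ × ℝ | p.2 ≤ p.1}.indicator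
    (fun p => exp (-α * p.1) * f p.2) (s, t)
  have hψ_meas : Measurable (Function.uncurry ψ) :=
    ((measurable_fst.const_mul _).exp.mul (hf.comp measurable_snd)).indicator
      (measurableSet_le measurable_snd measurable_fst)
  -- on `t ≤ s` we have `exp (-α s) ≤ exp (-α s / 2) * exp (-α t / 2)`, an integrable product
  have hψ_int : Integrable (Function.uncurry ψ)
      ((volume.restrict (Ioi 0)).prod (volume.restrict (Ioi 0))) := by
    have hM : 0 ≤ M := (abs_nonneg _).trans (hb 0)
    have hexp := exp_neg_integrableOn_Ioi 0 (half_pos hα)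
    refine Integrable.mono' ((hexp.mul_prod hexp).const_mul M) hψ_meas.aestronglyMeasurable
      (Eventually.of_forall fun ⟨s, t⟩ => ?_)
    by_cases hts : t ≤ s
    · simp only [ψ, Function.uncurry_apply_pair,
        indicator_of_mem (show (s, t) ∈ {p : ℝ × ℝ | p.2 ≤ p.1} from hts),
        norm_mul, norm_eq_abs, abs_exp]
      rw [mul_comm, ← exp_add]
      gcongr
      · exact hb t
      · nlinarith
    · simp only [ψ, Function.uncurry_apply_pair,
        indicator_of_notMem (show (s, t) ∉ {p : ℝ × ℝ | p.2 ≤ p.1} from hts), norm_zero]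
      positivity
  have h_inner_t : ∀ s ∈ Ioi (0:ℝ),
      ∫ t in Ioi 0, ψ s t = exp (-α * s) * ∫ t in (0:ℝ)..s, f t := by
    intro s (hs : 0 < s)
    have : ψ s = (Iic s).indicator fun t => exp (-α * s) * f t := rfl
    rw [this, setIntegral_indicator measurableSet_Iic, Ioi_inter_Iic, integral_const_mul,
      intervalIntegral.integral_of_le hs.le]
  have h_inner_s : ∀ t ∈ Ioi (0:ℝ), ∫ s in Ioi 0, ψ s t = α⁻¹ * (exp (-α * t) * f t) := by
    intro t (ht : 0 < t)
    have : (fun s => ψ s t) = (Ici t).indicator fun s => exp (-α * s) * f t := rfl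
    rw [this, setIntegral_indicator measurableSet_Ici,
      inter_eq_right.2 (Ici_subset_Ioi.2 ht), integral_mul_const, integral_Ici_exp_neg_mul hα]
    ring
  rw [← setIntegral_congr_fun measurableSet_Ioi h_inner_t, integral_integral_swap hψ_int,
    setIntegral_congr_fun measurableSet_Ioi h_inner_s, integral_const_mul]

lemma mul_setIntegral_exp_neg_mul_eq (hf : Measurable f) (hb : ∀ t, |f t| ≤ M) (hα : 0 < α) :
    α * ∫ t in Ioi 0, exp (-α * t) * f t
      = ∫ u in Ioi 0, exp (-u) * u * ((1 / (u / α)) * ∫ t in (0:ℝ)..u / α, f t) := by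
  have hscale := integral_comp_mul_left_Ioi
    (fun u => exp (-u) * u * ((1 / (u / α)) * ∫ t in (0:ℝ)..u / α, f t)) 0 hα
  have hrescaled : ∫ s in Ioi 0, exp (-(α * s)) * (α * s) * ((1 / (α * s / α)) *
      ∫ t in (0:ℝ)..α * s / α, f t) = α * ∫ s in Ioi 0, exp (-α * s) * ∫ t in (0:ℝ)..s, f t := by
    rw [← integral_const_mul]
    refine setIntegral_congr_fun measurableSet_Ioi fun s (hs : 0 < s) => ?_
    field_simp
  rw [mul_zero, smul_eq_mul, hrescaled, setIntegral_exp_neg_mul_mul_intervalIntegral hf hb hα,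
    mul_inv_cancel_left₀ hα.ne'] at hscale
  rw [hscale, mul_inv_cancel_left₀ hα.ne']

end Laplace

/-- Abelian direction of Feller's Tauberian theorem: if
`f : [0,∞) → ℝ` is measurable and bounded and the Cesàro means
`(1/T)∫₀^T f` converge to `L` as `T → ∞`, then the Abel means
`α ∫₀^∞ e^{-αt} f(t) dt` converge to `L` as `α ↓ 0`. -/
theorem stmt_7 (f : ℝ → ℝ) (hf : Measurable f) (M : ℝ) (hb : ∀ t, |f t| ≤ M)
    (L : ℝ)
    (hL : Tendsto (fun T : ℝ => (1 / T) * ∫ t in (0:ℝ)..T, f t) atTop (nhds L)) :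
    Tendsto (fun α : ℝ => α * ∫ t in Set.Ioi (0:ℝ), Real.exp (-α * t) * f t)
      (nhdsWithin 0 (Set.Ioi 0)) (nhds L) := by
  have hprimitive : Continuous fun T => ∫ t in (0:ℝ)..T, f t :=
    intervalIntegral.continuous_primitive (fun a b =>
      (Measure.integrableOn_of_bounded isCompact_uIcc.measure_lt_top.ne hf.aestronglyMeasurable
        (Eventually.of_forall hb)).intervalIntegrable) 0
  have hcesaro := tendsto_setIntegral_mul_comp_div integrableOn_exp_neg_mul_self_Ioi
    ((measurable_const.div measurable_id).mul hprimitive.measurable)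
    (abs_one_div_mul_intervalIntegral_le hb) hL
  rw [integral_exp_neg_mul_self_Ioi, one_mul] at hcesaro
  refine hcesaro.congr' ?_
  filter_upwards [self_mem_nhdsWithin] with α hα
  exact (mul_setIntegral_exp_neg_mul_eq hf hb hα).symm
end

section
/- Let f: [0,∞) → ℝ be Lebesgue-measurable and bounded. Then limsup_{α↓0} α ∫₀^∞ e^{-αt} f(t) dt ≤ limsup_{T→∞} (1/T)∫₀^T f(t) dt, and liminf_{T→∞} (1/T)∫₀^T f(t) dt ≤ liminf_{α↓0} α ∫₀^∞ e^{-αt} f(t) dt. -/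
/-!
Abel summation: with `F s = ∫₀ˢ f`, Fubini gives
`α ∫₀^∞ e^{-αt} f t dt = ∫₀^∞ α² s e^{-αs} (F s / s) ds`,
an average of the Cesàro means `F s / s` against the probability densities `α² s e^{-αs}`.
These densities give mass `O(α² T²)` to `(0, T]`, so if the Cesàro means stay below `c` beyond `T`,
the Abel mean at `α` is at most `c + O(α²)`; letting `α ↓ 0` and then `c ↓ limsup` gives the first
inequality. The second one is the first one for `-f`.
-/

open Filter MeasureTheory Set Real Topology

lemma integral_exp_neg_mul_Ioi {α : ℝ} (hα : 0 < α) (t : ℝ) :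
    ∫ s in Ioi t, exp (-α * s) = exp (-α * t) / α := by
  rw [integral_exp_mul_Ioi (neg_neg_of_pos hα), div_neg, neg_div, neg_neg]

lemma integrableOn_mul_exp_neg_mul_Ioi {α : ℝ} (hα : 0 < α) :
    IntegrableOn (fun s => s * exp (-α * s)) (Ioi 0) := by
  simpa using integrableOn_rpow_mul_exp_neg_mul_rpow (p := 1) (s := 1) (b := α)
    (by norm_num) one_pos hα

lemma integral_mul_exp_neg_mul_Ioi {α : ℝ} (hα : 0 < α) :
    ∫ s in Ioi 0, s * exp (-α * s) = 1 / α ^ 2 := by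
  have h := integral_rpow_mul_exp_neg_mul_Ioi two_pos hα
  rw [show (2:ℝ) - 1 = 1 by norm_num, Gamma_two, mul_one] at h
  simpa [neg_mul] using h

lemma integrableOn_exp_neg_mul_mul_Ioi {F : ℝ → ℝ}
    (hF : AEStronglyMeasurable F (volume.restrict (Ioi 0))) {K : ℝ}
    (hFK : ∀ s, 0 < s → |F s| ≤ K * s) {α : ℝ} (hα : 0 < α) :
    IntegrableOn (fun s => exp (-α * s) * F s) (Ioi 0) := by
  refine ((integrableOn_mul_exp_neg_mul_Ioi hα).const_mul K).mono' (by fun_prop)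
    ((ae_restrict_iff' measurableSet_Ioi).2 (ae_of_all _ fun s (hs : 0 < s) => ?_))
  rw [norm_mul, Real.norm_eq_abs, Real.norm_eq_abs, abs_of_pos (exp_pos _)]
  calc exp (-α * s) * |F s| ≤ exp (-α * s) * (K * s) := by gcongr; exact hFK s hs
    _ = K * (s * exp (-α * s)) := by ring

lemma sq_mul_integral_exp_neg_mul_le {F : ℝ → ℝ}
    (hF : AEStronglyMeasurable F (volume.restrict (Ioi 0))) {K c T : ℝ} (hT : 0 ≤ T)
    (hFK : ∀ s, 0 < s → |F s| ≤ K * s) (hFc : ∀ s, T < s → F s ≤ c * s) {α : ℝ} (hα : 0 < α) :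
    α ^ 2 * ∫ s in Ioi 0, exp (-α * s) * F s ≤ c + α ^ 2 * (T ^ 2 * (K + |c|)) := by
  set g : ℝ → ℝ := fun s => exp (-α * s) * F s - c * (s * exp (-α * s))
  have hW := integrableOn_mul_exp_neg_mul_Ioi hα
  have hexpF := integrableOn_exp_neg_mul_mul_Ioi hF hFK hα
  have hg : IntegrableOn g (Ioi 0) := hexpF.sub (hW.const_mul c)
  have hshift : α ^ 2 * ∫ s in Ioi 0, exp (-α * s) * F s = c + α ^ 2 * ∫ s in Ioi 0, g s := by
    rw [integral_sub hexpF (hW.const_mul c), integral_const_mul,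
      integral_mul_exp_neg_mul_Ioi hα]
    field_simp
    ring
  have htail : ∫ s in Ioi 0, g s ≤ ∫ s in Ioc 0 T, g s := by
    rw [← Ioc_union_Ioi_eq_Ioi hT, setIntegral_union (Ioc_disjoint_Ioi le_rfl) measurableSet_Ioi
      (hg.mono_set Ioc_subset_Ioi_self) (hg.mono_set (Ioi_subset_Ioi hT))]
    refine add_le_of_nonpos_right (setIntegral_nonpos measurableSet_Ioi fun s (hs : T < s) => ?_)
    have := mul_le_mul_of_nonneg_left (hFc s hs) (exp_pos (-α * s)).le
    linarith
  have hhead : ∫ s in Ioc 0 T, g s ≤ (K + |c|) * T * T := by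
    have hbound : ∀ s ∈ Ioc 0 T, ‖g s‖ ≤ (K + |c|) * T := fun s ⟨hs0, hsT⟩ => by
      have he : exp (-α * s) ≤ 1 := exp_le_one_iff.2 (by nlinarith)
      have hFs := hFK s hs0
      have hK : 0 ≤ K := nonneg_of_mul_nonneg_left ((abs_nonneg _).trans hFs) hs0
      calc ‖g s‖ ≤ exp (-α * s) * |F s| + |c| * (s * exp (-α * s)) := by
            rw [Real.norm_eq_abs]
            refine (abs_sub _ _).trans_eq ?_
            rw [abs_mul, abs_mul, abs_mul, abs_of_pos (exp_pos _), abs_of_pos hs0]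
        _ ≤ 1 * (K * s) + |c| * (s * 1) := by gcongr
        _ ≤ (K + |c|) * T := by nlinarith [abs_nonneg c]
    have := norm_setIntegral_le_of_norm_le_const (μ := volume) measure_Ioc_lt_top hbound
    rw [Real.volume_real_Ioc_of_le hT, sub_zero] at this
    exact (le_abs_self _).trans this
  calc α ^ 2 * ∫ s in Ioi 0, exp (-α * s) * F s = c + α ^ 2 * ∫ s in Ioi 0, g s := hshift
    _ ≤ c + α ^ 2 * ((K + |c|) * T * T) := by gcongr; exact htail.trans hhead
    _ = c + α ^ 2 * (T ^ 2 * (K + |c|)) := by ring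

variable {f : ℝ → ℝ} {M : ℝ}

lemma integrable_ite_lt_mul_exp_neg_mul (hf : Measurable f) (hb : ∀ t, |f t| ≤ M) {α : ℝ}
    (hα : 0 < α) :
    Integrable (Function.uncurry fun t s : ℝ => if t < s then α * exp (-α * s) * f t else 0)
      ((volume.restrict (Ioi 0)).prod (volume.restrict (Ioi 0))) := by
  have hexp := exp_neg_integrableOn_Ioi 0 (half_pos hα)
  refine ((hexp.const_mul M).mul_prod (hexp.const_mul α)).mono' ?_ (ae_of_all _ fun p => ?_)
  · exact (Measurable.ite (measurableSet_lt measurable_fst measurable_snd)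
      (by fun_prop) measurable_const).aestronglyMeasurable
  · simp only [Function.uncurry]
    split_ifs with hlt
    · have hexp_le : exp (-α * p.2) ≤ exp (-(α / 2) * p.1) * exp (-(α / 2) * p.2) := by
        rw [← exp_add]; exact exp_le_exp.2 (by nlinarith)
      rw [norm_mul, norm_mul, Real.norm_eq_abs, Real.norm_eq_abs, Real.norm_eq_abs,
        abs_of_pos hα, abs_of_pos (exp_pos _)]
      calc α * exp (-α * p.2) * |f p.1|
          ≤ α * (exp (-(α / 2) * p.1) * exp (-(α / 2) * p.2)) * M := by gcongr; exact hb _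
        _ = _ := by ring
    · rw [norm_zero]
      have := (abs_nonneg _).trans (hb 0)
      positivity

lemma integral_exp_neg_mul_mul_eq_integral_primitive (hf : Measurable f)
    (hb : ∀ t, |f t| ≤ M) {α : ℝ} (hα : 0 < α) :
    ∫ t in Ioi 0, exp (-α * t) * f t
      = α * ∫ s in Ioi 0, exp (-α * s) * ∫ t in (0:ℝ)..s, f t := by
  set μ := volume.restrict (Ioi (0:ℝ))
  let k : ℝ → ℝ → ℝ := fun t s => if t < s then α * exp (-α * s) * f t else 0
  have hrow : ∀ t ∈ Ioi (0:ℝ), ∫ s, k t s ∂μ = exp (-α * t) * f t := by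
    intro t ht
    have : k t = (Ioi t).indicator fun s => α * exp (-α * s) * f t := by
      ext s; simp [k, indicator_apply]
    rw [this, integral_indicator measurableSet_Ioi, Measure.restrict_restrict measurableSet_Ioi,
      Ioi_inter_Ioi, max_eq_left (le_of_lt ht), integral_mul_const, integral_const_mul,
      integral_exp_neg_mul_Ioi hα]
    field_simp
  have hcol : ∀ s ∈ Ioi (0:ℝ), ∫ t, k t s ∂μ = α * (exp (-α * s) * ∫ t in (0:ℝ)..s, f t) := by
    intro s hs
    have : (fun t => k t s) = (Iio s).indicator fun t => α * exp (-α * s) * f t := by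
      ext t; simp [k, indicator_apply]
    rw [this, integral_indicator measurableSet_Iio, Measure.restrict_restrict measurableSet_Iio,
      Iio_inter_Ioi, integral_const_mul, ← integral_Ioc_eq_integral_Ioo,
      ← intervalIntegral.integral_of_le (le_of_lt hs)]
    ring
  calc ∫ t in Ioi 0, exp (-α * t) * f t = ∫ t, ∫ s, k t s ∂μ ∂μ :=
        (setIntegral_congr_fun measurableSet_Ioi hrow).symm
    _ = ∫ s, ∫ t, k t s ∂μ ∂μ :=
        integral_integral_swap (integrable_ite_lt_mul_exp_neg_mul hf hb hα)
    _ = ∫ s in Ioi 0, α * (exp (-α * s) * ∫ t in (0:ℝ)..s, f t) :=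
        setIntegral_congr_fun measurableSet_Ioi hcol
    _ = _ := integral_const_mul _ _

noncomputable def abelMean (f : ℝ → ℝ) (α : ℝ) : ℝ :=
  α * ∫ t in Ioi 0, exp (-α * t) * f t

noncomputable def cesaroMean (f : ℝ → ℝ) (T : ℝ) : ℝ :=
  (1 / T) * ∫ t in (0:ℝ)..T, f t

lemma abs_intervalIntegral_zero_le (hb : ∀ t, |f t| ≤ M) {T : ℝ} (hT : 0 ≤ T) :
    |∫ t in (0:ℝ)..T, f t| ≤ M * T := by
  have h : ‖∫ t in (0:ℝ)..T, f t‖ ≤ M * |T - 0| :=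
    intervalIntegral.norm_integral_le_of_norm_le_const fun t _ => hb t
  rwa [Real.norm_eq_abs, sub_zero, abs_of_nonneg hT] at h

lemma abs_cesaroMean_le (hb : ∀ t, |f t| ≤ M) {T : ℝ} (hT : 0 < T) :
    |cesaroMean f T| ≤ M := by
  rw [cesaroMean, abs_mul, abs_of_pos (one_div_pos.2 hT), one_div_mul_eq_div, div_le_iff₀ hT]
  exact abs_intervalIntegral_zero_le hb hT.le

lemma abs_abelMean_le (hb : ∀ t, |f t| ≤ M) {α : ℝ} (hα : 0 < α) : |abelMean f α| ≤ M := by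
  have h : ‖∫ t in Ioi 0, exp (-α * t) * f t‖ ≤ ∫ t in Ioi 0, M * exp (-α * t) :=
    norm_integral_le_of_norm_le ((exp_neg_integrableOn_Ioi 0 hα).const_mul M)
      (ae_of_all _ fun t => by
        rw [norm_mul, Real.norm_eq_abs, Real.norm_eq_abs, abs_of_pos (exp_pos _), mul_comm]
        exact mul_le_mul_of_nonneg_right (hb t) (exp_pos _).le)
  rw [integral_const_mul, integral_exp_neg_mul_Ioi hα, mul_zero, exp_zero, mul_one_div,
    Real.norm_eq_abs, le_div_iff₀' hα] at h
  rwa [abelMean, abs_mul, abs_of_pos hα]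

lemma intervalIntegrable_of_abs_le (hf : Measurable f) (hb : ∀ t, |f t| ≤ M) (a b : ℝ) :
    IntervalIntegrable f volume a b := by
  rw [intervalIntegrable_iff]
  exact Measure.integrableOn_of_bounded (M := M) (measure_Ioc_lt_top (a := min a b)).ne
    hf.aestronglyMeasurable (ae_of_all _ hb)

lemma abelMean_le_of_cesaroMean_le (hf : Measurable f) (hb : ∀ t, |f t| ≤ M) {c T α : ℝ}
    (hT : 0 ≤ T) (hC : ∀ s, T < s → cesaroMean f s ≤ c) (hα : 0 < α) :
    abelMean f α ≤ c + α ^ 2 * (T ^ 2 * (M + |c|)) := by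
  have hF : Continuous fun s => ∫ t in (0:ℝ)..s, f t :=
    intervalIntegral.continuous_primitive (intervalIntegrable_of_abs_le hf hb) 0
  rw [abelMean, integral_exp_neg_mul_mul_eq_integral_primitive hf hb hα, ← mul_assoc, ← sq]
  refine sq_mul_integral_exp_neg_mul_le hF.aestronglyMeasurable hT
    (fun s hs => abs_intervalIntegral_zero_le hb hs.le) (fun s hs => ?_) hα
  have hs0 : 0 < s := hT.trans_lt hs
  have h := hC s hs
  rwa [cesaroMean, one_div_mul_eq_div, div_le_iff₀ hs0] at h

lemma isBoundedUnder_abs_abelMean (hb : ∀ t, |f t| ≤ M) :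
    IsBoundedUnder (· ≤ ·) (𝓝[>] 0) fun α => |abelMean f α| :=
  isBoundedUnder_of_eventually_le
    (eventually_nhdsWithin_of_forall fun _ hα => abs_abelMean_le hb hα)

lemma isBoundedUnder_abs_cesaroMean (hb : ∀ t, |f t| ≤ M) :
    IsBoundedUnder (· ≤ ·) atTop fun T => |cesaroMean f T| :=
  isBoundedUnder_of_eventually_le
    ((eventually_gt_atTop 0).mono fun _ hT => abs_cesaroMean_le hb hT)

lemma limsup_abelMean_le_limsup_cesaroMean (hf : Measurable f) (hb : ∀ t, |f t| ≤ M) :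
    limsup (abelMean f) (𝓝[>] 0) ≤ limsup (cesaroMean f) atTop := by
  refine le_of_forall_gt_imp_ge_of_dense fun c hc => ?_
  obtain ⟨T, hT⟩ := eventually_atTop.1
    (eventually_lt_of_limsup_lt hc (isBoundedUnder_le_abs.1 (isBoundedUnder_abs_cesaroMean hb)).1)
  set K := max T 0 ^ 2 * (M + |c|)
  have hlim : Tendsto (fun α : ℝ => c + α ^ 2 * K) (𝓝[>] 0) (𝓝 c) := by
    have : Continuous fun α : ℝ => c + α ^ 2 * K := by fun_prop
    simpa using (this.tendsto 0).mono_left nhdsWithin_le_nhds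
  calc limsup (abelMean f) (𝓝[>] 0) ≤ limsup (fun α : ℝ => c + α ^ 2 * K) (𝓝[>] 0) :=
        limsup_le_limsup
          (eventually_nhdsWithin_of_forall fun α hα => abelMean_le_of_cesaroMean_le hf hb
            (le_max_right T 0) (fun s hs => (hT s ((le_max_left T 0).trans hs.le)).le) hα)
          (isBoundedUnder_le_abs.1 (isBoundedUnder_abs_abelMean hb)).2.isCoboundedUnder_le
          hlim.isBoundedUnder_le
    _ = c := hlim.limsup_eq

lemma limsup_neg_eq_neg_liminf {β : Type*} {l : Filter β} [l.NeBot] {u : β → ℝ}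
    (hu : IsBoundedUnder (· ≤ ·) l fun x => |u x|) : limsup (-u) l = -liminf u l :=
  ((Antitone.map_liminf_of_continuousAt (fun _ _ h => neg_le_neg h) u
    continuous_neg.continuousAt (isBoundedUnder_le_abs.1 hu).1.isCoboundedUnder_ge
    (isBoundedUnder_le_abs.1 hu).2)).symm

lemma abelMean_neg : abelMean (-f) = -abelMean f := by
  ext α; simp [abelMean, integral_neg]

lemma cesaroMean_neg : cesaroMean (-f) = -cesaroMean f := by
  ext T; simp [cesaroMean]

lemma liminf_cesaroMean_le_liminf_abelMean (hf : Measurable f) (hb : ∀ t, |f t| ≤ M) :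
    liminf (cesaroMean f) atTop ≤ liminf (abelMean f) (𝓝[>] 0) := by
  have h := limsup_abelMean_le_limsup_cesaroMean hf.neg (f := -f) (by simpa using hb)
  rwa [abelMean_neg, cesaroMean_neg, limsup_neg_eq_neg_liminf (isBoundedUnder_abs_abelMean hb),
    limsup_neg_eq_neg_liminf (isBoundedUnder_abs_cesaroMean hb), neg_le_neg_iff] at h

/-- Feller's Tauberian inequalities: for measurable bounded
`f : [0,∞) → ℝ`, the Abel means are squeezed between the liminf and limsup of
the Cesàro means:
`limsup_{α↓0} α∫₀^∞ e^{-αt} f ≤ limsup_{T→∞} (1/T)∫₀^T f` and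
`liminf_{T→∞} (1/T)∫₀^T f ≤ liminf_{α↓0} α∫₀^∞ e^{-αt} f`. -/
theorem stmt_8 (f : ℝ → ℝ) (hf : Measurable f) (M : ℝ) (hb : ∀ t, |f t| ≤ M) :
    (limsup (fun α : ℝ => α * ∫ t in Set.Ioi (0:ℝ), Real.exp (-α * t) * f t)
        (nhdsWithin 0 (Set.Ioi 0))
      ≤ limsup (fun T : ℝ => (1 / T) * ∫ t in (0:ℝ)..T, f t) atTop) ∧
    (liminf (fun T : ℝ => (1 / T) * ∫ t in (0:ℝ)..T, f t) atTop
      ≤ liminf (fun α : ℝ => α * ∫ t in Set.Ioi (0:ℝ), Real.exp (-α * t) * f t)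
          (nhdsWithin 0 (Set.Ioi 0))) :=
  ⟨limsup_abelMean_le_limsup_cesaroMean hf hb, liminf_cesaroMean_le_liminf_abelMean hf hb⟩
end

section
/- Let (X_k)_{k≥1} be a sequence of positive random variables such that A = lim_{n→∞} (1/n)Σ_{k=1}^n X_k and C = lim_{n→∞} (1/(2n))Σ_{k=1}^n X_k² exist almost surely and in expectation, with 0 < A < ∞ and C < ∞. Define Z_n = Σ_{k=1}^n X_k and the sawtooth age process Δ(t) = t − Z_{N(t)} where N(t) = max{n : Z_n ≤ t} (with Z_0 = 0). Then almost surely lim_{T→∞} (1/T)∫₀^T Δ(t) dt = C / A, i.e., the time-average age equals (lim (1/2n)ΣE[X_k²]) / (lim (1/n)ΣX_k). -/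
/-!
Between consecutive updates the age is `t - Z m`, so the sawtooth encloses area
`(Z (k+1) - Z k)² / 2` over the `k`-th inter-update interval. If `N` is the index of the last
update before `T`, then `Z N ≤ T < Z (N+1)` and the area up to `T` lies between `Q N / 2` and
`Q (N+1) / 2`, where `Q` is the running sum of squared increments. Hence the time average lies
between `Q N / (2 Z (N+1))` and `Q (N+1) / (2 Z N)`; since `N → ∞` as `T → ∞`, both are
ratios `(Q n / 2n) / (Z n / n)` up to an index shift, and tend to `C / A`.
-/

open Filter MeasureTheory Topology Set

namespace StatusUpdate

noncomputable section

def lastUpdate (Z : ℕ → ℝ) (t : ℝ) : ℕ := sSup {n : ℕ | Z n ≤ t}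

def age (Z : ℕ → ℝ) (t : ℝ) : ℝ := t - Z (lastUpdate Z t)

def sumSqIncr (Z : ℕ → ℝ) (n : ℕ) : ℝ := ∑ k ∈ Finset.range n, (Z (k + 1) - Z k) ^ 2

end

lemma tendsto_succ_div_natCast {u : ℕ → ℝ} {a : ℝ}
    (hu : Tendsto (fun n : ℕ => u n / n) atTop (𝓝 a)) :
    Tendsto (fun n : ℕ => u (n + 1) / n) atTop (𝓝 a) := by
  have h := (hu.comp (tendsto_add_atTop_nat 1)).div (tendsto_natCast_div_add_atTop (1 : ℝ))
    one_ne_zero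
  rw [div_one] at h
  refine h.congr' ?_
  filter_upwards [eventually_ne_atTop 0] with n hn
  have : (n : ℝ) ≠ 0 := Nat.cast_ne_zero.2 hn
  simp only [Pi.div_apply, Function.comp_apply, Nat.cast_add, Nat.cast_one]
  field_simp

lemma tendsto_div_of_tendsto_div_natCast {u v : ℕ → ℝ} {a b : ℝ}
    (hu : Tendsto (fun n : ℕ => u n / n) atTop (𝓝 a))
    (hv : Tendsto (fun n : ℕ => v n / n) atTop (𝓝 b)) (hb : b ≠ 0) :
    Tendsto (fun n => u n / v n) atTop (𝓝 (a / b)) := by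
  refine (hu.div hv hb).congr' ?_
  filter_upwards [eventually_ne_atTop 0] with n hn
  rw [Pi.div_apply, div_div_div_cancel_right₀ (Nat.cast_ne_zero.2 hn)]

lemma tendsto_atTop_of_tendsto_div_natCast {u : ℕ → ℝ} {a : ℝ} (ha : 0 < a)
    (hu : Tendsto (fun n : ℕ => u n / n) atTop (𝓝 a)) : Tendsto u atTop atTop := by
  refine (tendsto_natCast_atTop_atTop.atTop_mul_pos ha hu).congr' ?_
  filter_upwards [eventually_ne_atTop 0] with n hn
  exact mul_div_cancel₀ _ (Nat.cast_ne_zero.2 hn)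

variable {Z : ℕ → ℝ}

lemma sumSqIncr_nonneg (n : ℕ) : 0 ≤ sumSqIncr Z n :=
  Finset.sum_nonneg fun _ _ => sq_nonneg _

lemma sumSqIncr_succ (n : ℕ) :
    sumSqIncr Z (n + 1) = sumSqIncr Z n + (Z (n + 1) - Z n) ^ 2 :=
  Finset.sum_range_succ _ _

lemma bddAbove_setOf_le (hZ : Tendsto Z atTop atTop) (t : ℝ) : BddAbove {n | Z n ≤ t} := by
  obtain ⟨N, hN⟩ := eventually_atTop.1 (hZ.eventually_gt_atTop t)
  exact ⟨N, fun n hn => not_lt.1 fun h => (hN n h.le).not_ge hn⟩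

lemma le_lastUpdate (hZ : Tendsto Z atTop atTop) {t : ℝ} {k : ℕ} (hk : Z k ≤ t) :
    k ≤ lastUpdate Z t :=
  le_csSup (bddAbove_setOf_le hZ t) hk

lemma tendsto_lastUpdate (hZ : Tendsto Z atTop atTop) :
    Tendsto (lastUpdate Z) atTop atTop :=
  tendsto_atTop.2 fun k => (eventually_ge_atTop (Z k)).mono fun _ => le_lastUpdate hZ

lemma lastUpdate_spec (hZ : Tendsto Z atTop atTop) {t : ℝ} (ht : Z 0 ≤ t) :
    Z (lastUpdate Z t) ≤ t ∧ t < Z (lastUpdate Z t + 1) :=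
  ⟨Nat.sSup_mem ⟨0, ht⟩ (bddAbove_setOf_le hZ t),
    lt_of_not_ge fun h => (le_lastUpdate hZ h).not_gt (Nat.lt_succ_self _)⟩

lemma lastUpdate_eq (hmono : Monotone Z) {t : ℝ} {k : ℕ} (ht : t ∈ Ico (Z k) (Z (k + 1))) :
    lastUpdate Z t = k := by
  have : {n | Z n ≤ t} = Iic k := by
    ext n
    simp only [mem_ofPred_eq, mem_Iic]
    refine ⟨fun hn => not_lt.1 fun hkn => ?_, fun hnk => (hmono hnk).trans ht.1⟩
    exact (ht.2.trans_le (hmono hkn)).not_ge hn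
  rw [lastUpdate, this, csSup_Iic]

lemma age_eqOn_Ico (hmono : Monotone Z) (m : ℕ) :
    EqOn (age Z) (fun t => t - Z m) (Ico (Z m) (Z (m + 1))) := fun t ht => by
  rw [age, lastUpdate_eq hmono ht]

section Piece

variable (hmono : Monotone Z) {m : ℕ} {b : ℝ} (hmb : Z m ≤ b) (hbm : b ≤ Z (m + 1))
include hmono hmb hbm

lemma age_eqOn_uIoo : EqOn (age Z) (fun t => t - Z m) (uIoo (Z m) b) := by
  rw [uIoo_of_le hmb]
  exact (age_eqOn_Ico hmono m).mono (Ioo_subset_Ico_self.trans (Ico_subset_Ico_right hbm))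

lemma intervalIntegrable_age_of_le : IntervalIntegrable (age Z) volume (Z m) b :=
  (intervalIntegral.intervalIntegrable_id.sub intervalIntegrable_const).congr_uIoo
    (age_eqOn_uIoo hmono hmb hbm).symm

lemma integral_age_of_le : ∫ t in Z m..b, age Z t = (b - Z m) ^ 2 / 2 := by
  rw [intervalIntegral.integral_congr_uIoo (age_eqOn_uIoo hmono hmb hbm),
    intervalIntegral.integral_comp_sub_right (fun t => t), sub_self, integral_id]
  ring

end Piece

section Renewal

variable (hmono : Monotone Z) (h0 : Z 0 = 0)
include hmono h0

lemma intervalIntegrable_age_update (n : ℕ) : IntervalIntegrable (age Z) volume 0 (Z n) :=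
  h0 ▸ IntervalIntegrable.trans_iterate fun k _ =>
    intervalIntegrable_age_of_le hmono (hmono k.le_succ) le_rfl

lemma integral_age_update (n : ℕ) : ∫ t in 0..Z n, age Z t = sumSqIncr Z n / 2 := by
  rw [← h0, ← intervalIntegral.sum_integral_adjacent_intervals fun k _ =>
    intervalIntegrable_age_of_le hmono (hmono k.le_succ) le_rfl, sumSqIncr, Finset.sum_div]
  exact Finset.sum_congr rfl fun k _ => integral_age_of_le hmono (hmono k.le_succ) le_rfl

variable (hZ : Tendsto Z atTop atTop)
include hZ

lemma integral_age {T : ℝ} (hT : 0 ≤ T) :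
    ∫ t in 0..T, age Z t =
      sumSqIncr Z (lastUpdate Z T) / 2 + (T - Z (lastUpdate Z T)) ^ 2 / 2 := by
  obtain ⟨hNT, hTN⟩ := lastUpdate_spec hZ (h0 ▸ hT)
  rw [← intervalIntegral.integral_add_adjacent_intervals
    (intervalIntegrable_age_update hmono h0 _) (intervalIntegrable_age_of_le hmono hNT hTN.le),
    integral_age_update hmono h0, integral_age_of_le hmono hNT hTN.le]

lemma average_age_mem_Icc {T : ℝ} (hT : 0 ≤ T) (hN : 0 < Z (lastUpdate Z T)) :
    (1 / T) * ∫ t in 0..T, age Z t ∈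
      Icc (sumSqIncr Z (lastUpdate Z T) / 2 / Z (lastUpdate Z T + 1))
        (sumSqIncr Z (lastUpdate Z T + 1) / 2 / Z (lastUpdate Z T)) := by
  rw [integral_age hmono h0 hZ hT, one_div_mul_eq_div, sumSqIncr_succ]
  obtain ⟨hNT, hTN⟩ := lastUpdate_spec hZ (h0 ▸ hT)
  set N := lastUpdate Z T
  have hTpos : 0 < T := hN.trans_le hNT
  have hgap : (T - Z N) ^ 2 ≤ (Z (N + 1) - Z N) ^ 2 :=
    pow_le_pow_left₀ (sub_nonneg.2 hNT) (by linarith) 2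
  have hQ : 0 ≤ sumSqIncr Z N / 2 := by linarith [sumSqIncr_nonneg (Z := Z) N]
  constructor
  · calc sumSqIncr Z N / 2 / Z (N + 1) ≤ sumSqIncr Z N / 2 / T := by gcongr
      _ ≤ _ := by gcongr; exact le_add_of_nonneg_right (by positivity)
  · calc (sumSqIncr Z N / 2 + (T - Z N) ^ 2 / 2) / T
        ≤ (sumSqIncr Z N + (Z (N + 1) - Z N) ^ 2) / 2 / T := by gcongr; linarith
      _ ≤ _ := by gcongr; linarith [sq_nonneg (Z (N + 1) - Z N)]

end Renewal

theorem tendsto_average_age {A C : ℝ} (hmono : Monotone Z) (h0 : Z 0 = 0) (hA : 0 < A)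
    (hZA : Tendsto (fun n : ℕ => Z n / n) atTop (𝓝 A))
    (hQC : Tendsto (fun n : ℕ => sumSqIncr Z n / 2 / n) atTop (𝓝 C)) :
    Tendsto (fun T => (1 / T) * ∫ t in 0..T, age Z t) atTop (𝓝 (C / A)) := by
  have hZ := tendsto_atTop_of_tendsto_div_natCast hA hZA
  have hN := tendsto_lastUpdate hZ
  have hlower := tendsto_div_of_tendsto_div_natCast hQC (tendsto_succ_div_natCast hZA) hA.ne'
  have hupper := tendsto_div_of_tendsto_div_natCast (tendsto_succ_div_natCast hQC) hZA hA.ne'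
  refine tendsto_of_tendsto_of_tendsto_of_le_of_le' (hlower.comp hN) (hupper.comp hN) ?_ ?_ <;>
  filter_upwards [eventually_ge_atTop 0, (hZ.comp hN).eventually_gt_atTop 0] with T hT hNT
  exacts [(average_age_mem_Icc hmono h0 hZ hT hNT).1, (average_age_mem_Icc hmono h0 hZ hT hNT).2]

end StatusUpdate

open StatusUpdate in
theorem stmt_12_general {Ω : Type*} [MeasurableSpace Ω] (μ : Measure Ω)
    (X : ℕ → Ω → ℝ)
    (hpos : ∀ k ω, 0 < X k ω)
    (Z : ℕ → Ω → ℝ)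
    (hZ : ∀ n ω, Z n ω = ∑ k ∈ Finset.range n, X (k + 1) ω)
    (A C : ℝ) (hA : 0 < A)
    (hA_lim : ∀ᵐ ω ∂μ, Tendsto
      (fun n : ℕ => (1 / (n : ℝ)) * ∑ k ∈ Finset.range n, X (k + 1) ω)
      atTop (nhds A))
    (hC_lim : ∀ᵐ ω ∂μ, Tendsto
      (fun n : ℕ => (1 / (2 * (n : ℝ))) * ∑ k ∈ Finset.range n, (X (k + 1) ω) ^ 2)
      atTop (nhds C)) :
    ∀ᵐ ω ∂μ, Tendsto
      (fun T : ℝ => (1 / T) *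
        ∫ t in (0:ℝ)..T, (t - Z (sSup {n : ℕ | Z n ω ≤ t}) ω))
      atTop (nhds (C / A)) := by
  filter_upwards [hA_lim, hC_lim] with ω hAω hCω
  have hincr (k : ℕ) : Z (k + 1) ω - Z k ω = X (k + 1) ω := by
    simp [hZ, Finset.sum_range_succ]
  have hmono : Monotone (Z · ω) :=
    monotone_nat_of_le_succ fun k => by linarith [hincr k, hpos (k + 1) ω]
  have h0 : Z 0 ω = 0 := by simp [hZ]
  have hZA : Tendsto (fun n : ℕ => Z n ω / n) atTop (𝓝 A) := by
    simpa only [hZ, one_div_mul_eq_div] using hAω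
  have hQC : Tendsto (fun n : ℕ => sumSqIncr (Z · ω) n / 2 / n) atTop (𝓝 C) := by
    simpa only [sumSqIncr, hincr, one_div_mul_eq_div, div_div] using hCω
  exact tendsto_average_age hmono h0 hA hZA hQC

/-- generalized renewal-reward for the sawtooth age process: if the
positive inter-update times `X_k` satisfy, almost surely,
`(1/n) Σ_{k=1}^n X_k → A ∈ (0,∞)` and `(1/(2n)) Σ_{k=1}^n X_k² → C < ∞`, then the
time-average of the age `Δ(t) = t − Z_{N(t)}` (with `Z_n = Σ_{k=1}^n X_k` and
`N(t) = max{n : Z_n ≤ t}`) converges almost surely to `C / A`. -/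
theorem stmt_12 {Ω : Type*} [MeasurableSpace Ω] (μ : Measure Ω)
    [IsProbabilityMeasure μ] (X : ℕ → Ω → ℝ)
    (hpos : ∀ k ω, 0 < X k ω)
    (Z : ℕ → Ω → ℝ)
    (hZ : ∀ n ω, Z n ω = ∑ k ∈ Finset.range n, X (k + 1) ω)
    (A C : ℝ) (hA : 0 < A)
    (hA_lim : ∀ᵐ ω ∂μ, Tendsto
      (fun n : ℕ => (1 / (n : ℝ)) * ∑ k ∈ Finset.range n, X (k + 1) ω)
      atTop (nhds A))
    (hC_lim : ∀ᵐ ω ∂μ, Tendsto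
      (fun n : ℕ => (1 / (2 * (n : ℝ))) * ∑ k ∈ Finset.range n, (X (k + 1) ω) ^ 2)
      atTop (nhds C)) :
    ∀ᵐ ω ∂μ, Tendsto
      (fun T : ℝ => (1 / T) *
        ∫ t in (0:ℝ)..T, (t - Z (sSup {n : ℕ | Z n ω ≤ t}) ω))
      atTop (nhds (C / A)) :=
  stmt_12_general μ X hpos Z hZ A C hA hA_lim hC_lim
end

section
/- For μ > 0, the function h(α) = ½α² + e^{-α}(α + 1) divided by g(α) = α + e^{-α} (i.e., the scaled average age μ·Δ̄(τ) with α = μτ from the B = 1 formula) satisfies: h(α)/g(α) → ∞ as α → ∞, h(α)/g(α) → 1 as α → 0⁺, and h/g attains a minimum at the unique α* > 0 with (α*)² = 2e^{-α*}. -/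
/-!
With `a(α) = (½α² + e^{-α}(α + 1)) / (α + e^{-α})`, the quotient rule gives
`a' = (1 - e^{-α})(½α² - e^{-α}) / (α + e^{-α})²`. On `α > 0` the first factor is positive, so
the sign of `a'` is that of `α² - 2e^{-α}`, a strictly increasing function with a single zero
`α*`: the ratio decreases up to `α*` and increases after it. The limits are elementary: the
ratio is continuous with value `1` at `0`, and grows at least like `α / 4`.
-/

open Filter Topology Set Real

noncomputable def aoiRatio (α : ℝ) : ℝ :=
  ((1 / 2) * α ^ 2 + exp (-α) * (α + 1)) / (α + exp (-α))

lemma add_exp_neg_pos (α : ℝ) : 0 < α + exp (-α) := by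
  linarith [add_one_le_exp (-α)]

lemma hasDerivAt_aoiRatio (α : ℝ) :
    HasDerivAt aoiRatio
      ((1 - exp (-α)) * ((1 / 2) * α ^ 2 - exp (-α)) / (α + exp (-α)) ^ 2) α := by
  have hexp : HasDerivAt (fun x : ℝ => exp (-x)) (-exp (-α)) α := by
    simpa using (hasDerivAt_neg α).exp
  have hnum : HasDerivAt (fun x : ℝ => (1 / 2) * x ^ 2 + exp (-x) * (x + 1))
      (α - α * exp (-α)) α :=
    (((hasDerivAt_pow 2 α).const_mul (1 / 2 : ℝ)).add
      (hexp.mul ((hasDerivAt_id' α).add_const 1))).congr_deriv (by ring)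
  have hden : HasDerivAt (fun x : ℝ => x + exp (-x)) (1 - exp (-α)) α :=
    ((hasDerivAt_id' α).add hexp).congr_deriv (by ring)
  exact (hnum.div hden (add_exp_neg_pos α).ne').congr_deriv (by ring)

lemma differentiable_aoiRatio : Differentiable ℝ aoiRatio :=
  fun α => (hasDerivAt_aoiRatio α).differentiableAt

lemma deriv_aoiRatio_nonpos {x : ℝ} (hx : 0 ≤ x) (hroot : x ^ 2 ≤ 2 * exp (-x)) :
    deriv aoiRatio x ≤ 0 := by
  rw [(hasDerivAt_aoiRatio x).deriv]
  have hexp : exp (-x) ≤ 1 := exp_le_one_iff.mpr (by linarith)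
  exact div_nonpos_of_nonpos_of_nonneg
    (mul_nonpos_of_nonneg_of_nonpos (by linarith) (by linarith)) (sq_nonneg _)

lemma deriv_aoiRatio_nonneg {x : ℝ} (hx : 0 ≤ x) (hroot : 2 * exp (-x) ≤ x ^ 2) :
    0 ≤ deriv aoiRatio x := by
  rw [(hasDerivAt_aoiRatio x).deriv]
  have hexp : exp (-x) ≤ 1 := exp_le_one_iff.mpr (by linarith)
  exact div_nonneg (mul_nonneg (by linarith) (by linarith)) (sq_nonneg _)

lemma strictMono_sq_sub_two_mul_exp_neg : StrictMono fun α : ℝ => α ^ 2 - 2 * exp (-α) := by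
  refine strictMono_of_deriv_pos fun α => ?_
  have hderiv : HasDerivAt (fun α : ℝ => α ^ 2 - 2 * exp (-α)) (2 * α + 2 * exp (-α)) α :=
    ((hasDerivAt_pow 2 α).sub (((hasDerivAt_neg α).exp).const_mul 2)).congr_deriv (by ring)
  rw [hderiv.deriv]
  linarith [add_one_le_exp (-α)]

lemma exists_pos_sq_eq_two_mul_exp_neg : ∃ a : ℝ, 0 < a ∧ a ^ 2 = 2 * exp (-a) := by
  have hcont : ContinuousOn (fun α : ℝ => α ^ 2 - 2 * exp (-α)) (Icc 0 2) := by fun_prop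
  have hsign : (0 : ℝ) ∈ Ioo (0 ^ 2 - 2 * exp (-0)) (2 ^ 2 - 2 * exp (-2)) := by
    have : exp (-2 : ℝ) ≤ 1 := exp_le_one_iff.mpr (by norm_num)
    constructor <;> norm_num
    linarith
  obtain ⟨a, ha, hroot⟩ := intermediate_value_Ioo (by norm_num) hcont hsign
  exact ⟨a, ha.1, by linarith [hroot]⟩

lemma isMinOn_aoiRatio {a : ℝ} (ha : 0 < a) (hroot : a ^ 2 = 2 * exp (-a)) :
    IsMinOn aoiRatio (Ioi 0) a := by
  have hmono := strictMono_sq_sub_two_mul_exp_neg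
  refine isMinOn_Ioi_of_deriv differentiable_aoiRatio.continuous.continuousAt
    differentiable_aoiRatio.differentiableOn differentiable_aoiRatio.differentiableOn
    (fun x hx => deriv_aoiRatio_nonpos hx.1.le ?_)
    (fun x hx => deriv_aoiRatio_nonneg (ha.trans hx).le ?_)
  · linarith [hmono.monotone hx.2.le]
  · linarith [hmono.monotone (le_of_lt hx)]

lemma div_four_le_aoiRatio {α : ℝ} (hα : 1 ≤ α) : α / 4 ≤ aoiRatio α := by
  have hexp : exp (-α) ≤ 1 := exp_le_one_iff.mpr (by linarith)
  rw [aoiRatio, le_div_iff₀ (add_exp_neg_pos α)]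
  nlinarith [exp_pos (-α)]

lemma tendsto_aoiRatio_atTop : Tendsto aoiRatio atTop atTop :=
  tendsto_atTop_mono' _ ((eventually_ge_atTop 1).mono fun _ => div_four_le_aoiRatio)
    (tendsto_id.atTop_div_const (by norm_num))

lemma tendsto_aoiRatio_nhdsGT_zero : Tendsto aoiRatio (𝓝[>] 0) (𝓝 1) := by
  have h := differentiable_aoiRatio.continuous.continuousAt (x := 0)
  rw [ContinuousAt, show aoiRatio 0 = 1 by simp [aoiRatio]] at h
  exact h.mono_left nhdsWithin_le_nhds

/-- with `h(α) = ½α² + e^{-α}(α+1)` and `g(α) = α + e^{-α}` (the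
scaled `B = 1` average-age formula `μ·Δ̄` with `α = μτ`), the ratio `h/g` tends to
`∞` as `α → ∞`, tends to `1` as `α → 0⁺`, and attains its minimum over `(0,∞)` at
the unique `α* > 0` satisfying `(α*)² = 2 e^{-α*}`. -/
theorem stmt_13 (h g : ℝ → ℝ)
    (hh : ∀ α, h α = (1/2) * α ^ 2 + Real.exp (-α) * (α + 1))
    (hg : ∀ α, g α = α + Real.exp (-α)) :
    Tendsto (fun α => h α / g α) atTop atTop ∧
    Tendsto (fun α => h α / g α) (nhdsWithin 0 (Set.Ioi 0)) (nhds 1) ∧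
    ∃ αs : ℝ, 0 < αs ∧ αs ^ 2 = 2 * Real.exp (-αs) ∧
      (∀ α > (0:ℝ), h αs / g αs ≤ h α / g α) ∧
      (∀ β > (0:ℝ), β ^ 2 = 2 * Real.exp (-β) → β = αs) := by
  have hratio : ∀ α, h α / g α = aoiRatio α := fun α => by rw [hh, hg, aoiRatio]
  simp only [hratio]
  obtain ⟨a, ha, hroot⟩ := exists_pos_sq_eq_two_mul_exp_neg
  refine ⟨tendsto_aoiRatio_atTop, tendsto_aoiRatio_nhdsGT_zero, a, ha, hroot,
    fun α hα => isMinOn_aoiRatio ha hroot hα, fun β _ hβ => ?_⟩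
  exact strictMono_sq_sub_two_mul_exp_neg.injective (by simp only [hβ, hroot, sub_self])
end

section
/- Let B ≥ 2, μ > 0, and thresholds τ_1 ≥ τ_2 ≥ ... ≥ τ_B > 0 with τ_1 < ∞. Consider the Markov chain on states {0,1,...,B−1} with transition probabilities P(j → B−1) = Pr(Y_{B−j} ≤ τ_{B−1}) and P(j → i) = Pr(Y_{1+i−j} ≤ τ_i) − Pr(Y_{2+i−j} ≤ τ_{i+1}) for i < B−1, where Y_m is Erlang(m, μ) for m ≥ 1 and Y_m = 0 a.s. for m ≤ 0. Then for every pair of states j, i, state i is reachable from j in at most B−1 steps with positive probability; hence the chain is irreducible (and, being finite, ergodic). -/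
/-- CDF of the Erlang distribution with rate `μ` and integer shape `m`, with the
convention `Y_m = 0` a.s. (so CDF ≡ 1 on `[0,∞)`) for `m ≤ 0`. -/
noncomputable def erlangCDF (μ : ℝ) (m : ℤ) (x : ℝ) : ℝ :=
  if m ≤ 0 then 1
  else 1 - ∑ v ∈ Finset.range m.toNat,
    Real.exp (-μ * x) * (μ * x) ^ v / (Nat.factorial v : ℝ)

/-! Writing `N_y` for a Poisson variable of mean `y`, `Pr(Y_m ≤ x) = 1 - Pr(N_{μx} < m)`. The
Poisson tail `Pr(N_y < m)` is nondecreasing in `m` and (its derivative being `-Pr(N_y = m - 1)`)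
nonincreasing in `y`, which makes every transition probability nonnegative. Moreover every state
jumps to the top state `B - 1` with positive probability, every state `j ≥ 1` steps down to
`j - 1` with probability at least `e^{-μτ}`, and `0` has a self-loop. Hence `i < j` is reached
from `j` by walking down, and `i ≥ j` by jumping to the top and walking down, in at most `B - 1`
steps. -/

open Finset Real
open scoped Nat

noncomputable def poissonProbLT (y : ℝ) (m : ℕ) : ℝ :=
  ∑ v ∈ range m, exp (-y) * y ^ v / v !

lemma poissonProbLT_nonneg {y : ℝ} (hy : 0 ≤ y) (m : ℕ) : 0 ≤ poissonProbLT y m :=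
  sum_nonneg fun v _ => by positivity

lemma poissonProbLT_pos {y : ℝ} (hy : 0 ≤ y) {m : ℕ} (hm : 0 < m) : 0 < poissonProbLT y m :=
  sum_pos' (fun v _ => by positivity) ⟨0, mem_range.2 hm, by simp [exp_pos]⟩

lemma poissonProbLT_lt_one {y : ℝ} (hy : 0 < y) (m : ℕ) : poissonProbLT y m < 1 := by
  have hsum : ∑ v ∈ range m, y ^ v / v ! < exp y := by
    have hle := sum_le_exp_of_nonneg hy.le (m + 1)
    rw [sum_range_succ] at hle
    have : 0 < y ^ m / m ! := by positivity
    linarith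
  calc poissonProbLT y m = exp (-y) * ∑ v ∈ range m, y ^ v / v ! := by
        simp only [poissonProbLT, mul_sum, mul_div_assoc]
    _ < exp (-y) * exp y := mul_lt_mul_of_pos_left hsum (exp_pos _)
    _ = 1 := by rw [← exp_add, neg_add_cancel, exp_zero]

lemma poissonProbLT_mono {y : ℝ} (hy : 0 ≤ y) : Monotone (poissonProbLT y) := fun _ _ hmn =>
  sum_le_sum_of_subset_of_nonneg (range_mono hmn) fun v _ _ => by positivity

lemma hasDerivAt_poissonProbLT_succ (m : ℕ) (y : ℝ) :
    HasDerivAt (fun y => poissonProbLT y (m + 1)) (-(exp (-y) * y ^ m / m !)) y := by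
  induction m with
  | zero => simpa [poissonProbLT] using (hasDerivAt_neg y).exp
  | succ m ih =>
    have hterm := ((hasDerivAt_neg y).exp.mul (hasDerivAt_pow (m + 1) y)).div_const
      ((m + 1 : ℕ) ! : ℝ)
    have hsplit : (fun y => poissonProbLT y (m + 1 + 1)) =
        fun y => poissonProbLT y (m + 1) + exp (-y) * y ^ (m + 1) / (m + 1 : ℕ) ! := by
      funext y; exact sum_range_succ _ _
    rw [hsplit]
    refine (ih.add hterm).congr_deriv ?_
    rw [Nat.factorial_succ]
    push_cast
    field_simp
    ring

lemma poissonProbLT_antitoneOn (m : ℕ) : AntitoneOn (poissonProbLT · m) (Set.Ici 0) := by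
  cases m with
  | zero => simpa [poissonProbLT] using antitoneOn_const
  | succ m =>
    refine antitoneOn_of_hasDerivWithinAt_nonpos (convex_Ici 0)
      (fun y _ => (hasDerivAt_poissonProbLT_succ m y).continuousAt.continuousWithinAt)
      (fun y _ => (hasDerivAt_poissonProbLT_succ m y).hasDerivWithinAt) fun y hy => ?_
    rw [interior_Ici] at hy
    have : 0 < y := hy
    exact neg_nonpos.2 (by positivity)

lemma erlangCDF_eq_one_sub_poissonProbLT (μ : ℝ) (m : ℤ) (x : ℝ) :
    erlangCDF μ m x = 1 - poissonProbLT (μ * x) m.toNat := by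
  unfold erlangCDF poissonProbLT
  split_ifs with hm
  · simp [Int.toNat_of_nonpos hm]
  · simp only [neg_mul]

lemma erlangCDF_of_nonpos (μ : ℝ) {m : ℤ} (hm : m ≤ 0) (x : ℝ) : erlangCDF μ m x = 1 :=
  if_pos hm

lemma erlangCDF_le_one {μ x : ℝ} (h : 0 ≤ μ * x) (m : ℤ) : erlangCDF μ m x ≤ 1 := by
  rw [erlangCDF_eq_one_sub_poissonProbLT]
  linarith [poissonProbLT_nonneg h m.toNat]

lemma erlangCDF_lt_one {μ x : ℝ} (h : 0 ≤ μ * x) {m : ℤ} (hm : 0 < m) : erlangCDF μ m x < 1 := by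
  rw [erlangCDF_eq_one_sub_poissonProbLT]
  linarith [poissonProbLT_pos h (Int.lt_toNat.2 hm)]

lemma erlangCDF_pos {μ x : ℝ} (h : 0 < μ * x) (m : ℤ) : 0 < erlangCDF μ m x := by
  rw [erlangCDF_eq_one_sub_poissonProbLT]
  linarith [poissonProbLT_lt_one h m.toNat]

lemma erlangCDF_mono {μ s t : ℝ} (hμ : 0 ≤ μ) (ht : 0 ≤ t) (hts : t ≤ s) (m : ℤ) :
    erlangCDF μ m t ≤ erlangCDF μ m s := by
  simp only [erlangCDF_eq_one_sub_poissonProbLT, sub_le_sub_iff_left]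
  exact poissonProbLT_antitoneOn _ (Set.mem_Ici.2 (by positivity))
    (Set.mem_Ici.2 (by nlinarith)) (by nlinarith)

lemma erlangCDF_add_one_le {μ x : ℝ} (h : 0 ≤ μ * x) (m : ℤ) :
    erlangCDF μ (m + 1) x ≤ erlangCDF μ m x := by
  simp only [erlangCDF_eq_one_sub_poissonProbLT, sub_le_sub_iff_left]
  exact poissonProbLT_mono h (Int.toNat_le_toNat (by omega))

namespace Matrix

variable {n R : Type*} [Fintype n] [DecidableEq n] [Semiring R] [PartialOrder R]
  [IsStrictOrderedRing R]

lemma pow_succ_apply_pos {A : Matrix n n R} (hA : ∀ i j, 0 ≤ A i j) {k : ℕ} {i l j : n}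
    (hil : 0 < A i l) (hlj : 0 < (A ^ k) l j) : 0 < (A ^ (k + 1)) i j := by
  rw [pow_succ', mul_apply]
  exact sum_pos' (fun m _ => mul_nonneg (hA i m) (pow_apply_nonneg hA k m j))
    ⟨l, mem_univ l, mul_pos hil hlj⟩

lemma pow_apply_pos_of_subdiagonal_pos {B : ℕ} {A : Matrix (Fin B) (Fin B) R}
    (hA : ∀ i j, 0 ≤ A i j) (hsub : ∀ i j : Fin B, (j : ℕ) + 1 = i → 0 < A i j) (d : ℕ) :
    ∀ i j : Fin B, (j : ℕ) + d = i → 0 < (A ^ d) i j := by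
  induction d with
  | zero =>
    intro i j hij
    obtain rfl : i = j := Fin.ext (by omega)
    simp
  | succ d ih =>
    intro i j hij
    have hl : (j : ℕ) + d < B := by omega
    exact pow_succ_apply_pos hA (hsub i ⟨_, hl⟩ (by simp only; omega)) (ih _ j rfl)

end Matrix

noncomputable def batteryChain (B : ℕ) (μ : ℝ) (τ : ℕ → ℝ) : Matrix (Fin B) (Fin B) ℝ :=
  Matrix.of fun j i =>
    if (i : ℕ) = B - 1 then erlangCDF μ ((B : ℤ) - (j : ℕ)) (τ (B - 1))
    else if (i : ℕ) = 0 then 1 - erlangCDF μ (2 - (j : ℕ)) (τ 1)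
    else erlangCDF μ (1 + (i : ℕ) - (j : ℕ)) (τ i)
          - erlangCDF μ (2 + (i : ℕ) - (j : ℕ)) (τ ((i : ℕ) + 1))

section batteryChain

variable {B : ℕ} {μ : ℝ} {τ : ℕ → ℝ}

lemma batteryChain_top_pos (hB : 2 ≤ B) (hμ : 0 < μ) (hpos : ∀ i, 1 ≤ i → i ≤ B → 0 < τ i)
    (j : Fin B) {i : Fin B} (hi : (i : ℕ) = B - 1) : 0 < batteryChain B μ τ j i := by
  rw [batteryChain, Matrix.of_apply, if_pos hi]
  exact erlangCDF_pos (mul_pos hμ (hpos _ (by omega) (by omega))) _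

lemma batteryChain_nonneg (hB : 2 ≤ B) (hμ : 0 < μ) (hpos : ∀ i, 1 ≤ i → i ≤ B → 0 < τ i)
    (hmono : ∀ i j, 1 ≤ i → i ≤ j → j ≤ B → τ j ≤ τ i) (j i : Fin B) :
    0 ≤ batteryChain B μ τ j i := by
  by_cases htop : (i : ℕ) = B - 1
  · exact (batteryChain_top_pos hB hμ hpos j htop).le
  have hi := i.isLt
  rw [batteryChain, Matrix.of_apply, if_neg htop]
  split_ifs with hzero
  · exact sub_nonneg.2 (erlangCDF_le_one (mul_pos hμ (hpos 1 le_rfl (by omega))).le _)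
  · have hτ : 0 ≤ μ * τ (i + 1) := (mul_pos hμ (hpos _ (by omega) (by omega))).le
    rw [show (2 + (i : ℕ) - (j : ℕ) : ℤ) = 1 + (i : ℕ) - (j : ℕ) + 1 by ring, sub_nonneg]
    exact (erlangCDF_add_one_le hτ _).trans <| erlangCDF_mono hμ.le
      (hpos _ (by omega) (by omega)).le (hmono _ _ (by omega) (by omega) (by omega)) _

lemma batteryChain_pos_of_succ_eq (hμ : 0 < μ) (hpos : ∀ i, 1 ≤ i → i ≤ B → 0 < τ i)
    {j i : Fin B} (hij : (i : ℕ) + 1 = j) : 0 < batteryChain B μ τ j i := by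
  have hj := j.isLt
  have hτ : 0 ≤ μ * τ (i + 1) := (mul_pos hμ (hpos _ (by omega) (by omega))).le
  rw [batteryChain, Matrix.of_apply, if_neg (by omega)]
  split_ifs with hzero
  · rw [hzero, zero_add] at hτ
    exact sub_pos.2 (erlangCDF_lt_one hτ (by omega))
  · rw [erlangCDF_of_nonpos _ (by omega), sub_pos]
    exact erlangCDF_lt_one hτ (by omega)

lemma batteryChain_zero_zero_pos (hB : 2 ≤ B) (hμ : 0 < μ)
    (hpos : ∀ i, 1 ≤ i → i ≤ B → 0 < τ i) {j i : Fin B} (hj : (j : ℕ) = 0) (hi : (i : ℕ) = 0) :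
    0 < batteryChain B μ τ j i := by
  rw [batteryChain, Matrix.of_apply, if_neg (by omega), if_pos hi, hj, sub_pos]
  exact erlangCDF_lt_one (mul_pos hμ (hpos 1 le_rfl (by omega))).le (by norm_num)

end batteryChain

/-- for the battery-level DTMC sampled at update instants of a
monotone threshold policy (`B ≥ 2`, Poisson rate `μ > 0`, finite positive
non-increasing thresholds `τ_1 ≥ ... ≥ τ_B > 0`), with transitions
`P(j → B−1) = Pr(Y_{B−j} ≤ τ_{B−1})`,
`P(j → 0) = 1 − Pr(Y_{2−j} ≤ τ_1)`, and
`P(j → i) = Pr(Y_{1+i−j} ≤ τ_i) − Pr(Y_{2+i−j} ≤ τ_{i+1})` for `0 < i < B−1`,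
every state `i` is reachable from every state `j` in at most `B−1` steps with
positive probability; hence the finite chain is irreducible (ergodic). -/
theorem stmt_15 (B : ℕ) (hB : 2 ≤ B) (μ : ℝ) (hμ : 0 < μ) (τ : ℕ → ℝ)
    (hpos : ∀ i, 1 ≤ i → i ≤ B → 0 < τ i)
    (hmono : ∀ i j, 1 ≤ i → i ≤ j → j ≤ B → τ j ≤ τ i)
    (P : Matrix (Fin B) (Fin B) ℝ)
    (hP : ∀ j i : Fin B, P j i =
      if (i : ℕ) = B - 1 then erlangCDF μ ((B : ℤ) - (j : ℕ)) (τ (B - 1))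
      else if (i : ℕ) = 0 then 1 - erlangCDF μ (2 - (j : ℕ)) (τ 1)
      else erlangCDF μ (1 + (i : ℕ) - (j : ℕ)) (τ i)
            - erlangCDF μ (2 + (i : ℕ) - (j : ℕ)) (τ ((i : ℕ) + 1))) :
    ∀ j i : Fin B, ∃ n : ℕ, 1 ≤ n ∧ n ≤ B - 1 ∧ 0 < (P ^ n) j i := by
  obtain rfl : P = batteryChain B μ τ := Matrix.ext hP
  have hnn := batteryChain_nonneg hB hμ hpos hmono
  have hdown := Matrix.pow_apply_pos_of_subdiagonal_pos hnn
    fun _ _ h => batteryChain_pos_of_succ_eq hμ hpos h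
  intro j i
  by_cases hij : (i : ℕ) < j
  · exact ⟨j - i, by omega, by omega, hdown _ j i (by omega)⟩
  by_cases htop : (i : ℕ) = B - 1
  · exact ⟨1, le_rfl, by omega, by simpa using batteryChain_top_pos hB hμ hpos j htop⟩
  by_cases hzero : (i : ℕ) = 0
  · exact ⟨1, le_rfl, by omega,
      by simpa using batteryChain_zero_zero_pos hB hμ hpos (by omega) hzero⟩
  have hlast : B - 1 < B := by omega
  exact ⟨B - 1 - i + 1, by omega, by omega, Matrix.pow_succ_apply_pos hnn
    (batteryChain_top_pos hB hμ hpos j (i := ⟨B - 1, hlast⟩) rfl)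
    (hdown _ _ i (by simp only; omega))⟩
end
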